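/- Let k ≥ 1 and let D be an Euler directed multigraph containing k pairwise arc-disjoint directed cycles. Then the arcs of D can be partitioned into k non-empty closed directed walks; that is, there exist k non-empty closed directed walks in D such that every arc occurrence of D is traversed exactly once by exactly one of the walks. -/

import Mathlib

/-!
Statement 6: Let k ≥ 1 and let D be an Euler directed multigraph containing k pairwise
arc-disjoint directed cycles.  Then the arcs of D can be partitioned into k non-empty
closed directed walks: there exist k non-empty closed directed walks in D such that every
arc occurrence of D is traversed exactly once by exactly one of the walks, i.e. for every
arc the total number of traversals by the k walks equals its multiplicity in D.
-/

/-- `L` is the arc list of a (possibly empty) closed directed walk in the directed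
multigraph with arc multiplicities `μ`. -/
def IsClosedWalkM {V : Type} (μ : V × V → ℕ) (L : List (V × V)) : Prop :=
  (∀ a ∈ L, 0 < μ a) ∧ List.Chain' (fun p q => p.2 = q.1) L ∧
    L.getLast?.map Prod.snd = L.head?.map Prod.fst

/-- `L` is the arc list of a directed cycle in the directed multigraph with arc
multiplicities `μ`. -/
def IsCycleM {V : Type} (μ : V × V → ℕ) (L : List (V × V)) : Prop :=
  L ≠ [] ∧ IsClosedWalkM μ L ∧ (L.map Prod.fst).Nodup

/-- In-degree of a vertex in a directed multigraph (arcs counted with multiplicity). -/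
def minDeg {V : Type} [Fintype V] (μ : V × V → ℕ) (v : V) : ℕ := ∑ u, μ (u, v)

/-- Out-degree of a vertex in a directed multigraph (arcs counted with multiplicity). -/
def moutDeg {V : Type} [Fintype V] (μ : V × V → ℕ) (v : V) : ℕ := ∑ u, μ (v, u)

/-- A directed multigraph is Euler if it has no loops, its underlying undirected graph is
connected and every vertex is balanced. -/
def IsEulerM {V : Type} [Fintype V] (μ : V × V → ℕ) : Prop :=
  (∀ v, μ (v, v) = 0) ∧ (SimpleGraph.fromRel (fun u v => 0 < μ (u, v))).Connected ∧
    ∀ v, minDeg μ v = moutDeg μ v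

/-!
Removing the `k` given cycles leaves a balanced multigraph, and a balanced multigraph splits
into cycles: inside the set of vertices of positive out-degree, which balance makes closed under
following an out-arc, any successor function eventually cycles. Together with the `k` given
cycles this partitions the arcs into at least `k` non-empty closed walks. While there are more
than `k` of them, connectivity yields two walks through a common vertex; rotating both to start
there and concatenating them merges the two, lowering the number of walks by one.
-/

theorem List.exists_head?_rotate_eq {α : Type*} {l : List α} {x : α} (hx : x ∈ l) :
    ∃ n, (l.rotate n).head? = some x := by
  obtain ⟨s, t, rfl⟩ := List.append_of_mem hx
  exact ⟨s.length, by rw [List.rotate_append_length_eq]; rfl⟩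

theorem Function.exists_iterate_mem_periodicPts {α : Type*} [Finite α] (f : α → α) (x : α) :
    ∃ m, f^[m] x ∈ periodicPts f := by
  obtain ⟨m, n, hne, heq⟩ := Finite.exists_ne_map_eq_of_infinite (f^[·] x)
  wlog hmn : m < n generalizing m n
  · exact this n m hne.symm heq.symm (hne.lt_or_gt.resolve_left hmn)
  refine ⟨m, mk_mem_periodicPts (Nat.sub_pos_of_lt hmn) ?_⟩
  rw [IsPeriodicPt, IsFixedPt, ← iterate_add_apply, Nat.sub_add_cancel hmn.le]
  exact heq.symm

theorem Function.map_iterate_range_minimalPeriod_eq_rotate {α : Type*} (f : α → α) (x : α) :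
    ((List.range (minimalPeriod f x)).map (f^[·] x)).map f =
      ((List.range (minimalPeriod f x)).map (f^[·] x)).rotate 1 := by
  refine List.ext_getElem (by simp) fun i _ _ => ?_
  simp [List.getElem_rotate, iterate_mod_minimalPeriod_eq, ← iterate_succ_apply' f]

theorem Multiset.exists_fin_map_univ_eq {α : Type*} {Q : Multiset α} {k : ℕ}
    (hQ : Multiset.card Q = k) : ∃ W : Fin k → α, Finset.univ.val.map W = Q := by
  subst hQ
  induction Q using Quot.inductionOn with
  | h l =>
    change ∃ W : Fin l.length → α, Finset.univ.val.map W = (l : Multiset α)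
    exact ⟨l.get, by rw [Fin.univ_val_map, List.ofFn_get]⟩

variable {V : Type}

section ClosedWalk

/-- The head of each arc is the tail of the next one, cyclically. -/
def IsClosedWalk (L : List (V × V)) : Prop :=
  L.map Prod.snd = (L.map Prod.fst).rotate 1

theorem isChain_cons_and_getLast_snd_iff (a : V × V) (t : List (V × V)) (x : V) :
    (a :: t).IsChain (fun p q => p.2 = q.1) ∧ ((a :: t).getLast (List.cons_ne_nil a t)).2 = x ↔
      a.2 :: t.map Prod.snd = t.map Prod.fst ++ [x] := by
  induction t generalizing a with
  | nil => simp [eq_comm]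
  | cons b t ih =>
    rw [List.isChain_cons_cons, List.getLast_cons_cons, and_assoc, ih b]
    simp

theorem isClosedWalkM_iff {μ : V × V → ℕ} {L : List (V × V)} :
    IsClosedWalkM μ L ↔ (∀ a ∈ L, 0 < μ a) ∧ IsClosedWalk L := by
  refine and_congr_right fun _ => ?_
  show L.IsChain _ ∧ _ ↔ _
  cases L with
  | nil => simp [IsClosedWalk]
  | cons a t =>
    simpa [IsClosedWalk, List.getLast?_eq_some_getLast] using
      isChain_cons_and_getLast_snd_iff a t a.1

theorem IsClosedWalk.snd_mem {L : List (V × V)} (hL : IsClosedWalk L) {a : V × V} (ha : a ∈ L) :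
    a.2 ∈ L.map Prod.fst :=
  List.mem_rotate.1 (hL ▸ List.mem_map_of_mem ha)

theorem IsClosedWalk.rotate {L : List (V × V)} (hL : IsClosedWalk L) (n : ℕ) :
    IsClosedWalk (L.rotate n) := by
  rw [IsClosedWalk, List.map_rotate, List.map_rotate, hL, List.rotate_rotate, List.rotate_rotate,
    add_comm]

theorem IsClosedWalk.append {L M : List (V × V)} (hL : IsClosedWalk L) (hM : IsClosedWalk M)
    (h : (L.map Prod.fst).head? = (M.map Prod.fst).head?) : IsClosedWalk (L ++ M) := by
  cases L with
  | nil => simpa using hM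
  | cons a t =>
  cases M with
  | nil => simpa using hL
  | cons b s =>
    simp only [IsClosedWalk, List.map_cons, List.head?_cons, Option.some.injEq,
      List.rotate_cons_succ, List.rotate_zero] at hL hM h
    have key : a.2 :: t.map Prod.snd ++ (b.2 :: s.map Prod.snd) =
        t.map Prod.fst ++ b.1 :: s.map Prod.fst ++ [b.1] := by
      rw [hL, hM, h]; simp
    simpa [IsClosedWalk, h] using key

theorem IsClosedWalk.exists_perm_append {L M : List (V × V)} (hL : IsClosedWalk L)
    (hM : IsClosedWalk M) {v : V} (hvL : v ∈ L.map Prod.fst) (hvM : v ∈ M.map Prod.fst) :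
    ∃ W, IsClosedWalk W ∧ W.Perm (L ++ M) := by
  obtain ⟨m, hm⟩ := List.exists_head?_rotate_eq hvL
  obtain ⟨n, hn⟩ := List.exists_head?_rotate_eq hvM
  refine ⟨L.rotate m ++ M.rotate n, (hL.rotate m).append (hM.rotate n) ?_, ?_⟩
  · rw [List.map_rotate, List.map_rotate, hm, hn]
  · exact (L.rotate_perm m).append (M.rotate_perm n)

open Function in
theorem exists_nodup_isClosedWalk [Finite V] {r : V → V → Prop} (S : Set V) {x : V}
    (hx : x ∈ S) (hr : ∀ v ∈ S, ∃ u ∈ S, r v u) :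
    ∃ L : List (V × V), L ≠ [] ∧ IsClosedWalk L ∧ L.Nodup ∧ ∀ a ∈ L, r a.1 a.2 := by
  choose! f hfS hfr using hr
  obtain ⟨m, hm⟩ := exists_iterate_mem_periodicPts f x
  set y := f^[m] x
  have hyS : ∀ n, f^[n] y ∈ S := fun n => Set.MapsTo.iterate hfS n (Set.MapsTo.iterate hfS m hx)
  have hnodup := nodup_periodicOrbit (f := f) (x := y)
  rw [periodicOrbit_def, Cycle.nodup_coe_iff] at hnodup
  refine ⟨((List.range (minimalPeriod f y)).map (f^[·] y)).map fun v => (v, f v), ?_, ?_,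
    hnodup.map fun _ _ h => congrArg Prod.fst h, ?_⟩
  · simpa using (minimalPeriod_pos_of_mem_periodicPts hm).ne'
  · simpa [IsClosedWalk, Function.comp_def] using map_iterate_range_minimalPeriod_eq_rotate f y
  · simpa using fun n _ => hfr _ (hyS n)

end ClosedWalk

section Balanced
variable [Fintype V]

def IsBalanced (μ : V × V → ℕ) : Prop := ∀ v, minDeg μ v = moutDeg μ v

theorem isBalanced_zero : IsBalanced (0 : V × V → ℕ) := fun v => by simp [minDeg, moutDeg]

theorem IsBalanced.add {μ ν : V × V → ℕ} (hμ : IsBalanced μ) (hν : IsBalanced ν) :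
    IsBalanced (μ + ν) := fun v => by
  have hin : minDeg (μ + ν) v = minDeg μ v + minDeg ν v := Finset.sum_add_distrib
  have hout : moutDeg (μ + ν) v = moutDeg μ v + moutDeg ν v := Finset.sum_add_distrib
  rw [hin, hout, hμ v, hν v]

theorem IsBalanced.sub {μ ν : V × V → ℕ} (hμ : IsBalanced μ) (hν : IsBalanced ν)
    (h : ν ≤ μ) : IsBalanced (μ - ν) := fun v => by
  have hin : minDeg (μ - ν) v = minDeg μ v - minDeg ν v :=
    Finset.sum_tsub_distrib _ fun u _ => h (u, v)
  have hout : moutDeg (μ - ν) v = moutDeg μ v - moutDeg ν v :=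
    Finset.sum_tsub_distrib _ fun u _ => h (v, u)
  rw [hin, hout, hμ v, hν v]

end Balanced

section Decomposition
variable [DecidableEq V]

def arcCount (L : List (V × V)) : V × V → ℕ := fun a => L.count a

def IsWalkDecomposition (μ : V × V → ℕ) (P : Multiset (List (V × V))) : Prop :=
  (∀ L ∈ P, L ≠ [] ∧ IsClosedWalk L) ∧ (P.map arcCount).sum = μ

theorem IsWalkDecomposition.add {μ ν : V × V → ℕ} {P Q : Multiset (List (V × V))}
    (hP : IsWalkDecomposition μ P) (hQ : IsWalkDecomposition ν Q) :
    IsWalkDecomposition (μ + ν) (P + Q) := by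
  refine ⟨fun L hL => ?_, by rw [Multiset.map_add, Multiset.sum_add, hP.2, hQ.2]⟩
  exact (Multiset.mem_add.1 hL).elim (hP.1 L) (hQ.1 L)

theorem isWalkDecomposition_map_univ_iff {ι : Type*} [Fintype ι] {μ : V × V → ℕ}
    {W : ι → List (V × V)} :
    IsWalkDecomposition μ (Finset.univ.val.map W) ↔
      (∀ i, W i ≠ [] ∧ IsClosedWalk (W i)) ∧ ∀ a, ∑ i, (W i).count a = μ a := by
  simp [IsWalkDecomposition, funext_iff, Finset.sum_apply, arcCount]

theorem IsWalkDecomposition.isClosedWalkM {μ : V × V → ℕ} {P : Multiset (List (V × V))}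
    (hP : IsWalkDecomposition μ P) {L : List (V × V)} (hL : L ∈ P) : IsClosedWalkM μ L := by
  refine isClosedWalkM_iff.2 ⟨fun a ha => ?_, (hP.1 L hL).2⟩
  calc 0 < arcCount L a := List.count_pos_iff.2 ha
    _ ≤ μ a := hP.2 ▸ Multiset.le_sum_of_mem (Multiset.mem_map_of_mem arcCount hL) a

theorem IsWalkDecomposition.exists_mem_of_pos {μ : V × V → ℕ} {P : Multiset (List (V × V))}
    (hP : IsWalkDecomposition μ P) {a : V × V} (ha : 0 < μ a) : ∃ N ∈ P, a ∈ N := by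
  by_contra! h
  rw [← hP.2, Pi.multiset_sum_apply, Multiset.map_map] at ha
  refine ha.ne' (Multiset.sum_eq_zero fun c hc => ?_)
  obtain ⟨N, hN, rfl⟩ := Multiset.mem_map.1 hc
  exact List.count_eq_zero_of_not_mem (h N hN)

theorem IsWalkDecomposition.exists_mem_of_adj {μ : V × V → ℕ} {P : Multiset (List (V × V))}
    (hP : IsWalkDecomposition μ P) {u w : V}
    (huw : (SimpleGraph.fromRel fun u v => 0 < μ (u, v)).Adj u w) :
    ∃ N ∈ P, u ∈ N.map Prod.fst ∧ w ∈ N.map Prod.fst := by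
  rcases huw.2 with h | h
  · obtain ⟨N, hN, ha⟩ := hP.exists_mem_of_pos h
    exact ⟨N, hN, List.mem_map_of_mem ha, (hP.1 N hN).2.snd_mem ha⟩
  · obtain ⟨N, hN, ha⟩ := hP.exists_mem_of_pos h
    exact ⟨N, hN, (hP.1 N hN).2.snd_mem ha, List.mem_map_of_mem ha⟩

theorem IsWalkDecomposition.exists_mem_map_fst_inter {μ : V × V → ℕ} {L : List (V × V)}
    {R : Multiset (List (V × V))}
    (hconn : (SimpleGraph.fromRel fun u v => 0 < μ (u, v)).Connected)
    (hP : IsWalkDecomposition μ (L ::ₘ R)) (hR : R ≠ 0) :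
    ∃ M ∈ R, ∃ v ∈ L.map Prod.fst, v ∈ M.map Prod.fst := by
  by_contra! hdisj
  obtain ⟨M, hM⟩ := Multiset.exists_mem_of_ne_zero hR
  have hx := List.mem_map_of_mem (f := Prod.fst)
    (List.head_mem (hP.1 L (Multiset.mem_cons_self L R)).1)
  have hy := List.mem_map_of_mem (f := Prod.fst)
    (List.head_mem (hP.1 M (Multiset.mem_cons_of_mem hM)).1)
  obtain ⟨d, -, hdL, hdL'⟩ := (hconn.preconnected _ _).some.exists_boundary_dart
    {v | v ∈ L.map Prod.fst} hx fun hyL => hdisj M hM _ hyL hy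
  obtain ⟨N, hN, hN₁, hN₂⟩ := hP.exists_mem_of_adj d.adj
  rcases Multiset.mem_cons.1 hN with rfl | hN
  · exact hdL' hN₂
  · exact hdisj N hN _ hdL hN₁

theorem IsWalkDecomposition.exists_card_add_one_eq {μ : V × V → ℕ}
    {P : Multiset (List (V × V))}
    (hconn : (SimpleGraph.fromRel fun u v => 0 < μ (u, v)).Connected)
    (hP : IsWalkDecomposition μ P) (hcard : 2 ≤ Multiset.card P) :
    ∃ Q, Multiset.card Q + 1 = Multiset.card P ∧ IsWalkDecomposition μ Q := by
  obtain ⟨L, hL⟩ := Multiset.card_pos_iff_exists_mem.1 (by omega : 0 < Multiset.card P)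
  obtain ⟨R, rfl⟩ := Multiset.exists_cons_of_mem hL
  have hR : R ≠ 0 := by rintro rfl; simp at hcard
  obtain ⟨M, hM, v, hvL, hvM⟩ := hP.exists_mem_map_fst_inter hconn hR
  obtain ⟨R, rfl⟩ := Multiset.exists_cons_of_mem hM
  obtain ⟨W, hW, hWLM⟩ := (hP.1 L (by simp)).2.exists_perm_append (hP.1 M (by simp)).2 hvL hvM
  obtain ⟨a, ha, -⟩ := List.mem_map.1 hvL
  have hWne : W ≠ [] := List.ne_nil_of_mem (hWLM.mem_iff.2 (List.mem_append_left M ha))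
  have hWcount : arcCount W = arcCount L + arcCount M := by
    funext a; simp [arcCount, hWLM.count_eq, List.count_append]
  refine ⟨W ::ₘ R, by simp, fun N hN => ?_, ?_⟩
  · rcases Multiset.mem_cons.1 hN with rfl | hN
    · exact ⟨hWne, hW⟩
    · exact hP.1 N (by simp [hN])
  · simpa [hWcount, add_assoc] using hP.2

theorem IsWalkDecomposition.exists_card_eq {μ : V × V → ℕ} {P : Multiset (List (V × V))}
    (hconn : (SimpleGraph.fromRel fun u v => 0 < μ (u, v)).Connected)
    (hP : IsWalkDecomposition μ P) {k : ℕ} (hk : 1 ≤ k) (hkP : k ≤ Multiset.card P) :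
    ∃ Q, Multiset.card Q = k ∧ IsWalkDecomposition μ Q := by
  obtain ⟨n, hn⟩ := Nat.exists_eq_add_of_le hkP
  induction n generalizing P with
  | zero => exact ⟨P, hn, hP⟩
  | succ n ih =>
    obtain ⟨Q, hQP, hQ⟩ := hP.exists_card_add_one_eq hconn (by omega)
    exact ih hQ (by omega) (by omega)

variable [Fintype V]

theorem minDeg_arcCount (L : List (V × V)) (v : V) :
    minDeg (arcCount L) v = (L.map Prod.snd).count v := by
  induction L with
  | nil => simp [minDeg, arcCount]
  | cons a L ih =>
    obtain ⟨x, y⟩ := a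
    simp only [minDeg, arcCount] at ih
    by_cases hy : y = v <;>
      simp [minDeg, arcCount, List.count_cons, Finset.sum_add_distrib, ih, hy]

theorem moutDeg_arcCount (L : List (V × V)) (v : V) :
    moutDeg (arcCount L) v = (L.map Prod.fst).count v := by
  induction L with
  | nil => simp [moutDeg, arcCount]
  | cons a L ih =>
    obtain ⟨x, y⟩ := a
    simp only [moutDeg, arcCount] at ih
    by_cases hx : x = v <;>
      simp [moutDeg, arcCount, List.count_cons, Finset.sum_add_distrib, ih, hx]

theorem IsClosedWalk.isBalanced_arcCount {L : List (V × V)} (hL : IsClosedWalk L) :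
    IsBalanced (arcCount L) := fun v => by
  rw [minDeg_arcCount, moutDeg_arcCount, hL, (List.rotate_perm _ 1).count_eq]

theorem IsWalkDecomposition.isBalanced {μ : V × V → ℕ} {P : Multiset (List (V × V))}
    (hP : IsWalkDecomposition μ P) : IsBalanced μ := by
  rw [← hP.2]
  refine Multiset.sum_induction _ _ (fun _ _ => IsBalanced.add) isBalanced_zero ?_
  simp only [Multiset.forall_mem_map_iff]
  exact fun L hL => (hP.1 L hL).2.isBalanced_arcCount

theorem IsBalanced.exists_isClosedWalk_le {ν : V × V → ℕ} (hν : IsBalanced ν)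
    (hν0 : ν ≠ 0) : ∃ L, L ≠ [] ∧ IsClosedWalk L ∧ arcCount L ≤ ν := by
  obtain ⟨a, ha⟩ := Function.ne_iff.1 hν0
  have hout : ∀ v u, ν (v, u) ≤ moutDeg ν v := fun v u =>
    Finset.single_le_sum (f := fun u => ν (v, u)) (fun _ _ => Nat.zero_le _) (Finset.mem_univ u)
  have hin : ∀ v u, ν (v, u) ≤ moutDeg ν u := fun v u => hν u ▸
    Finset.single_le_sum (f := fun v => ν (v, u)) (fun _ _ => Nat.zero_le _) (Finset.mem_univ v)
  obtain ⟨L, hLne, hL, hLnodup, hLpos⟩ := exists_nodup_isClosedWalk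
    (r := fun v u => 0 < ν (v, u)) {v | 0 < moutDeg ν v} (x := a.1)
    (lt_of_lt_of_le (Nat.pos_of_ne_zero ha) (hout a.1 a.2)) fun v hv => by
      obtain ⟨u, -, hu⟩ := Finset.sum_pos_iff.1 (show 0 < ∑ u, ν (v, u) from hv)
      exact ⟨u, lt_of_lt_of_le hu (hin v u), hu⟩
  refine ⟨L, hLne, hL, fun b => ?_⟩
  by_cases hb : b ∈ L
  · exact (List.nodup_iff_count_le_one.1 hLnodup b).trans (hLpos b hb)
  · simp [arcCount, List.count_eq_zero_of_not_mem hb]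

theorem IsBalanced.exists_isWalkDecomposition {ν : V × V → ℕ} (hν : IsBalanced ν) :
    ∃ P, IsWalkDecomposition ν P := by
  by_cases hν0 : ν = 0
  · exact ⟨0, by simp [IsWalkDecomposition, hν0]⟩
  obtain ⟨L, hLne, hL, hLν⟩ := hν.exists_isClosedWalk_le hν0
  obtain ⟨P, hP⟩ := (hν.sub hL.isBalanced_arcCount hLν).exists_isWalkDecomposition
  have hLP : IsWalkDecomposition (arcCount L) {L} := ⟨by simp [hLne, hL], by simp⟩
  exact ⟨{L} + P, add_tsub_cancel_of_le hLν ▸ hLP.add hP⟩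
termination_by ∑ a, ν a
decreasing_by
  obtain ⟨b, hb⟩ := List.exists_mem_of_ne_nil L hLne
  have hb : 0 < arcCount L b := List.count_pos_iff.2 hb
  exact Finset.sum_lt_sum (fun _ _ => tsub_le_self)
    ⟨b, Finset.mem_univ b, Nat.sub_lt (hb.trans_le (hLν b)) hb⟩

end Decomposition

theorem stmt6 {V : Type} [Fintype V] [DecidableEq V] (μ : V × V → ℕ)
    (hEuler : IsEulerM μ) (k : ℕ) (hk : 1 ≤ k)
    -- k pairwise arc-disjoint directed cycles in D :
    (C : Fin k → List (V × V)) (hC : ∀ i, IsCycleM μ (C i))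
    (hdisj : ∀ a : V × V, (∑ i, (C i).count a) ≤ μ a) :
    ∃ W : Fin k → List (V × V), (∀ i, W i ≠ [] ∧ IsClosedWalkM μ (W i)) ∧
      ∀ a : V × V, (∑ i, (W i).count a) = μ a := by
  obtain ⟨-, hconn, hbal⟩ := hEuler
  have hcycles : IsWalkDecomposition (∑ i, arcCount (C i)) (Finset.univ.val.map C) :=
    isWalkDecomposition_map_univ_iff.2
      ⟨fun i => ⟨(hC i).1, (isClosedWalkM_iff.1 (hC i).2.1).2⟩,
        fun a => by simp [Finset.sum_apply, arcCount]⟩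
  have hle : ∑ i, arcCount (C i) ≤ μ := fun a => by
    simpa [Finset.sum_apply, arcCount] using hdisj a
  obtain ⟨P, hP⟩ := (IsBalanced.sub hbal hcycles.isBalanced hle).exists_isWalkDecomposition
  have hall := hcycles.add hP
  rw [add_tsub_cancel_of_le hle] at hall
  obtain ⟨Q, hQk, hQ⟩ := hall.exists_card_eq hconn hk (by simp)
  obtain ⟨W, rfl⟩ := Multiset.exists_fin_map_univ_eq hQk
  obtain ⟨hW, hWμ⟩ := isWalkDecomposition_map_univ_iff.1 hQ
  refine ⟨W, fun i => ⟨(hW i).1, hQ.isClosedWalkM ?_⟩, hWμ⟩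
  exact Multiset.mem_map_of_mem W (Finset.mem_univ i)
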